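/- Let Λ and Σ be countable locally finite graphs, and suppose there exists a fibration π : V_Λ → V_Σ, i.e., a surjective map such that for every vertex x of Λ and every neighbour v of π(x) in Σ there is a neighbour y of x in Λ with π(y) = v. Then p_c^site(Λ) ≤ p_c^site(Σ). -/

import Mathlib

open MeasureTheory ProbabilityTheory

/-- Bernoulli measure of parameter `p` on `Bool`. -/
noncomputable def bern (p : ENNReal) : Measure Bool :=
  p • Measure.dirac true + (1 - p) • Measure.dirac false

/-- `P` is the law of an i.i.d. family of Bernoulli(p) random variables indexed by `ι`:
all finite-dimensional marginals are product Bernoulli measures. -/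
def iidMarginals {ι : Type*} (p : ENNReal) (P : Measure (ι → Bool)) : Prop :=
  IsProbabilityMeasure P ∧ ∀ s : Finset ι,
    P.map (fun ω (i : s) => ω i) = Measure.pi (fun _ : s => bern p)

/-- The open cluster of `v` in site percolation with configuration `ω`. -/
def siteCluster {V : Type*} (G : SimpleGraph V) (ω : V → Bool) (v : V) : Set V :=
  {w | ∃ wk : G.Walk v w, ∀ u ∈ wk.support, ω u = true}

/-- Some site-percolation cluster is infinite. -/
def sitePercolates {V : Type*} (G : SimpleGraph V) (ω : V → Bool) : Prop :=
  ∃ v, (siteCluster G ω v).Infinite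

/-- The critical parameter of site percolation. -/
noncomputable def pcSite {V : Type*} (G : SimpleGraph V) : ENNReal :=
  sSup {p | p ≤ 1 ∧ ∀ P : Measure (V → Bool), iidMarginals p P →
    P {ω | sitePercolates G ω} = 0}

/-- The open cluster of `v` in bond percolation with configuration `ω`. -/
def bondCluster {V : Type*} (G : SimpleGraph V) (ω : Sym2 V → Bool) (v : V) : Set V :=
  {w | ∃ wk : G.Walk v w, ∀ e ∈ wk.edges, ω e = true}

/-- Some bond-percolation cluster is infinite. -/
def bondPercolates {V : Type*} (G : SimpleGraph V) (ω : Sym2 V → Bool) : Prop :=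
  ∃ v, (bondCluster G ω v).Infinite

/-- The critical parameter of bond percolation. -/
noncomputable def pcBond {V : Type*} (G : SimpleGraph V) : ENNReal :=
  sSup {p | p ≤ 1 ∧ ∀ P : Measure (Sym2 V → Bool), iidMarginals p P →
    P {ω | bondPercolates G ω} = 0}

/-- A fibration from `Λ` to `S`: a surjective map on vertices along which every edge
of `S` can be lifted with prescribed starting point. -/
def IsFibration {VL VS : Type*} (Λ : SimpleGraph VL) (S : SimpleGraph VS)
    (π : VL → VS) : Prop :=
  Function.Surjective π ∧
    ∀ x : VL, ∀ v : VS, S.Adj (π x) v → ∃ y : VL, Λ.Adj x y ∧ π y = v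

/-!
Any law with i.i.d. Bernoulli(p) marginals is the product measure `infinitePi`, which exists on
every index type, so it suffices to compare product measures. Explore the open cluster of `x` in
`Λ` and that of `π x` in `Σ` simultaneously, one vertex at a time, keeping the vertices examined
in `Λ` above those examined in `Σ`. A fresh vertex `π y` of `Σ` then has a fresh partner `y`, both
open with the same probability independently of the past, and the path-lifting property lifts
the newly discovered neighbours of `π y` to neighbours of `y`. By induction on the number of
vertices to be found and on the list of sources, the `Σ`-exploration is less likely than the
`Λ`-exploration to reach `k` vertices; letting `k → ∞` and using surjectivity of `π` compares the
percolation probabilities.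
-/

open scoped ENNReal

section Bernoulli

variable {ι : Type*} {p : ℝ≥0∞}

lemma isProbabilityMeasure_bern (hp : p ≤ 1) : IsProbabilityMeasure (bern p) :=
  ⟨by simp [bern, Measure.add_apply, add_tsub_cancel_of_le hp]⟩

lemma iidMarginals_iff_eq_infinitePi [IsProbabilityMeasure (bern p)] (P : Measure (ι → Bool)) :
    iidMarginals p P ↔ P = Measure.infinitePi (fun _ : ι => bern p) := by
  constructor
  · rintro ⟨-, hP⟩
    refine Measure.eq_infinitePi _ fun s t ht => ?_
    rw [← Finset.prod_coe_sort, ← Measure.pi_pi, ← hP s,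
      Measure.map_apply (measurable_pi_lambda (fun (ω : ι → Bool) (i : s) => ω i)
        fun i => measurable_pi_apply _) (.univ_pi fun i : s => ht i)]
    congr 1
    ext ω
    simp
  · rintro rfl
    exact ⟨inferInstance, fun s => Measure.infinitePi_map_restrict _⟩

end Bernoulli

section CoordinateSigma

variable {ι β : Type*} [MeasurableSpace β]

abbrev coordSigma (s : Set ι) : MeasurableSpace (ι → β) :=
  ⨆ i ∈ s, MeasurableSpace.comap (fun ω : ι → β => ω i) ‹_›

lemma coordSigma_le (s : Set ι) : coordSigma s ≤ (MeasurableSpace.pi : MeasurableSpace (ι → β)) :=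
  iSup₂_le fun i _ => (measurable_pi_apply i).comap_le

lemma measurable_coordSigma_apply {s : Set ι} {i : ι} (hi : i ∈ s) :
    Measurable[coordSigma s] fun ω : ι → β => ω i :=
  Measurable.of_comap_le (le_iSup₂ (f := fun j (_ : j ∈ s) =>
    MeasurableSpace.comap (fun ω : ι → β => ω j) ‹_›) i hi)

lemma infinitePi_inter_eq_mul (ν : Measure β) [IsProbabilityMeasure ν] {s : Set ι} {w : ι}
    (hw : w ∉ s) {B : Set β} (hB : MeasurableSet B) {A : Set (ι → β)}
    (hA : MeasurableSet[coordSigma s] A) :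
    Measure.infinitePi (fun _ => ν) ((fun ω => ω w) ⁻¹' B ∩ A)
      = ν B * Measure.infinitePi (fun _ => ν) A := by
  have hindep := (iIndepFun_iff_iIndep _ _ _).1 <|
    iIndepFun_infinitePi (P := fun _ : ι => ν) (X := fun _ => id) fun _ => measurable_id
  have := (Indep_iff _ _ _).1 (indep_iSup_of_disjoint (fun i => (measurable_pi_apply i).comap_le)
    hindep (Set.disjoint_singleton_left.2 hw)) ((fun ω => ω w) ⁻¹' B) A ?_ hA
  · rw [this, ← Measure.map_apply (measurable_pi_apply w) hB, Measure.infinitePi_map_eval]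
  · exact measurable_coordSigma_apply (Set.mem_singleton w) hB

end CoordinateSigma

lemma Set.natCast_le_encard_iff {α : Type*} {s : Set α} {k : ℕ} :
    (k : ℕ∞) ≤ s.encard ↔ ∃ t : Finset α, t.card = k ∧ ↑t ⊆ s := by
  constructor
  · intro h
    obtain ⟨t, hts, htk⟩ := Set.exists_subset_encard_eq h
    have ht := Set.finite_of_encard_eq_coe htk
    rw [ht.encard_eq_coe_toFinset_card, Nat.cast_inj] at htk
    exact ⟨ht.toFinset, htk, by simpa using hts⟩
  · rintro ⟨t, rfl, hts⟩
    simpa using Set.encard_le_encard hts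

namespace SimpleGraph

open MeasureTheory.Measure

variable {V : Type*} (G : SimpleGraph V)

/-- What an exploration of the open clusters of the sources `L` can still discover once it has
examined the vertices of `F`. -/
def openReach (L : List V) (F : Set V) (ω : V → Bool) : Set V :=
  {u | ∃ a ∈ L, ∃ wk : G.Walk a u, ∀ z ∈ wk.support, z ∉ F ∧ ω z = true}

variable {G} {L L' : List V} {F F' : Set V} {ω : V → Bool} {w : V}

lemma openReach_singleton_empty (v : V) : G.openReach [v] ∅ ω = siteCluster G ω v := by
  simp [openReach, siteCluster]

@[simp]
lemma openReach_nil : G.openReach [] F ω = ∅ := by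
  simp [openReach]

lemma openReach_mono (hL : ∀ a ∈ L, a ∈ L') (hF : F' ⊆ F) :
    G.openReach L F ω ⊆ G.openReach L' F' ω := by
  rintro u ⟨a, ha, wk, hwk⟩
  exact ⟨a, hL a ha, wk, fun z hz => ⟨fun h => (hwk z hz).1 (hF h), (hwk z hz).2⟩⟩

lemma openReach_cons_of_mem (hw : w ∈ F) : G.openReach (w :: L) F ω = G.openReach L F ω := by
  refine (openReach_mono (fun a ha => List.mem_cons_of_mem w ha) le_rfl).antisymm' ?_
  rintro u ⟨a, ha, wk, hwk⟩
  obtain rfl | ha := List.mem_cons.1 ha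
  · exact absurd hw (hwk a wk.start_mem_support).1
  · exact ⟨a, ha, wk, hwk⟩

lemma openReach_cons_of_closed (hw : ω w = false) :
    G.openReach (w :: L) F ω = G.openReach L (insert w F) ω := by
  refine (openReach_mono (fun a ha => List.mem_cons_of_mem w ha)
    (Set.subset_insert w F)).antisymm' ?_
  rintro u ⟨a, ha, wk, hwk⟩
  have hne : ∀ z ∈ wk.support, z ≠ w := fun z hz hzw => by simpa [hzw, hw] using (hwk z hz).2
  obtain rfl | ha := List.mem_cons.1 ha
  · exact absurd rfl (hne a wk.start_mem_support)
  · exact ⟨a, ha, wk, fun z hz => ⟨by simpa [hne z hz] using (hwk z hz).1, (hwk z hz).2⟩⟩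

lemma not_mem_openReach_insert : w ∉ G.openReach L (insert w F) ω := by
  rintro ⟨a, -, wk, hwk⟩
  exact (hwk w wk.end_mem_support).1 (Set.mem_insert w F)

lemma openReach_cons_of_open [Fintype (G.neighborSet w)] (hwF : w ∉ F) (hw : ω w = true) :
    G.openReach (w :: L) F ω
      = insert w (G.openReach (L ++ (G.neighborFinset w).toList) (insert w F) ω) := by
  classical
  ext u
  simp only [openReach, Set.mem_insert_iff, Set.mem_ofPred_eq, List.mem_append, Finset.mem_toList,
    mem_neighborFinset]
  constructor
  · rintro ⟨a, ha, wk, hwk⟩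
    have hq : ∀ z ∈ wk.bypass.support, z ∉ F ∧ ω z = true :=
      fun z hz => hwk z (wk.support_bypass_subset_support hz)
    by_cases hwq : w ∈ wk.bypass.support
    · -- Being a path, `wk.bypass` leaves its only visit of `w` through a neighbour of `w`.
      have hr := wk.bypass_isPath.dropUntil hwq
      have hrq := wk.bypass.support_dropUntil_subset_support hwq
      generalize wk.bypass.dropUntil w hwq = r at hr hrq
      cases r with
      | nil => exact Or.inl rfl
      | cons hadj p =>
        rw [Walk.cons_isPath_iff] at hr
        refine Or.inr ⟨_, Or.inr hadj, p, fun z hz => ⟨?_, (hq z (hrq (by simp [hz]))).2⟩⟩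
        rintro (rfl | hzF)
        exacts [hr.2 hz, (hq z (hrq (by simp [hz]))).1 hzF]
    · have haL : a ∈ L := (List.mem_cons.1 ha).resolve_left
        (by rintro rfl; exact hwq wk.bypass.start_mem_support)
      refine Or.inr ⟨a, Or.inl haL, wk.bypass, fun z hz => ⟨?_, (hq z hz).2⟩⟩
      rintro (rfl | hzF)
      exacts [hwq hz, (hq z hz).1 hzF]
  · have hweaken : ∀ z, z ∉ insert w F ∧ ω z = true → z ∉ F ∧ ω z = true :=
      fun z hz => ⟨fun h => hz.1 (Set.mem_insert_of_mem w h), hz.2⟩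
    rintro (rfl | ⟨a, haL | hadj, wk, hwk⟩)
    · exact ⟨u, List.mem_cons_self, .nil, by simpa using ⟨hwF, hw⟩⟩
    · exact ⟨a, List.mem_cons_of_mem w haL, wk, fun z hz => hweaken z (hwk z hz)⟩
    · refine ⟨w, List.mem_cons_self, .cons hadj wk, fun z hz => ?_⟩
      obtain rfl | hz := List.mem_cons.1 (wk.support_cons hadj ▸ hz)
      exacts [⟨hwF, hw⟩, hweaken z (hwk z hz)]

instance Walk.instCountable [Countable V] (a b : V) : Countable (G.Walk a b) :=
  Function.Injective.countable fun _ _ => Walk.ext_support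

variable (G)

def openReachAtLeast (k : ℕ) (L : List V) (F : Set V) : Set (V → Bool) :=
  {ω | (k : ℕ∞) ≤ (G.openReach L F ω).encard}

variable {G}

lemma openReachAtLeast_zero (L : List V) (F : Set V) : G.openReachAtLeast 0 L F = Set.univ := by
  simp [openReachAtLeast]

lemma openReachAtLeast_succ_nil (k : ℕ) (F : Set V) : G.openReachAtLeast (k + 1) [] F = ∅ := by
  simp [openReachAtLeast]

lemma openReachAtLeast_mono {k : ℕ} {L L' : List V} {F F' : Set V} (hL : ∀ a ∈ L, a ∈ L')
    (hF : F' ⊆ F) : G.openReachAtLeast k L F ⊆ G.openReachAtLeast k L' F' :=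
  fun _ hω => hω.trans (Set.encard_le_encard (openReach_mono hL hF))

lemma antitone_openReachAtLeast (L : List V) (F : Set V) :
    Antitone fun k => G.openReachAtLeast k L F :=
  fun _ _ hkk' _ hω => show (_ : ℕ∞) ≤ _ from (Nat.cast_le.2 hkk').trans hω

lemma iInter_openReachAtLeast_singleton (v : V) :
    ⋂ k, G.openReachAtLeast k [v] ∅ = {ω | (siteCluster G ω v).Infinite} := by
  ext ω
  simp [openReachAtLeast, openReach_singleton_empty, ← Set.encard_eq_top_iff,
    ENat.eq_top_iff_forall_ge]

lemma measurableSet_openReachAtLeast [Countable V] (k : ℕ) (L : List V) (F : Set V) :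
    MeasurableSet[coordSigma Fᶜ] (G.openReachAtLeast k L F) := by
  have hopen : ∀ z, MeasurableSet[coordSigma Fᶜ] {ω : V → Bool | z ∉ F ∧ ω z = true} := by
    intro z
    by_cases hz : z ∈ F
    · simp [hz]
    · have : {ω : V → Bool | z ∉ F ∧ ω z = true} = (fun ω => ω z) ⁻¹' {true} := by
        ext; simp [hz]
      exact this ▸ measurable_coordSigma_apply (Set.mem_compl hz) (measurableSet_singleton true)
  have hmem : ∀ u, MeasurableSet[coordSigma Fᶜ] {ω | u ∈ G.openReach L F ω} := by
    intro u
    have : {ω | u ∈ G.openReach L F ω} = ⋃ a, ⋃ (_ : a ∈ L), ⋃ wk : G.Walk a u,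
        ⋂ z, ⋂ (_ : z ∈ wk.support), {ω : V → Bool | z ∉ F ∧ ω z = true} := by
      ext ω
      simp [openReach]
    rw [this]
    exact .iUnion fun a => .iUnion fun _ => .iUnion fun wk => .iInter fun z => .iInter fun _ =>
      hopen z
  have : G.openReachAtLeast k L F
      = ⋃ t : Finset V, ⋃ (_ : t.card = k), ⋂ u ∈ t, {ω | u ∈ G.openReach L F ω} := by
    ext ω
    simp [openReachAtLeast, Set.natCast_le_encard_iff, Set.subset_def]
  rw [this]
  exact .iUnion fun t => .iUnion fun _ => .iInter fun u => .iInter fun _ => hmem u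

section Step

variable {w : V} {F : Set V} [Fintype (G.neighborSet w)]

lemma openReachAtLeast_succ_cons (hw : w ∉ F) (k : ℕ) (L : List V) :
    G.openReachAtLeast (k + 1) (w :: L) F
      = (fun ω => ω w) ⁻¹' {true}
          ∩ G.openReachAtLeast k (L ++ (G.neighborFinset w).toList) (insert w F)
        ∪ (fun ω => ω w) ⁻¹' {false} ∩ G.openReachAtLeast (k + 1) L (insert w F) := by
  ext ω
  cases hb : ω w
  · simp [openReachAtLeast, openReach_cons_of_closed hb, hb]
  · simp [openReachAtLeast, openReach_cons_of_open hw hb,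
      Set.encard_insert_of_notMem not_mem_openReach_insert, hb]

lemma infinitePi_openReachAtLeast_succ_cons [Countable V] (ν : Measure Bool)
    [IsProbabilityMeasure ν] (hw : w ∉ F) (k : ℕ) (L : List V) :
    infinitePi (fun _ : V => ν) (G.openReachAtLeast (k + 1) (w :: L) F)
      = ν {true} * infinitePi (fun _ => ν)
          (G.openReachAtLeast k (L ++ (G.neighborFinset w).toList) (insert w F))
        + ν {false} * infinitePi (fun _ => ν) (G.openReachAtLeast (k + 1) L (insert w F)) := by
  have hwF : w ∉ (insert w F)ᶜ := fun h => h (Set.mem_insert w F)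
  rw [openReachAtLeast_succ_cons hw, measure_union, infinitePi_inter_eq_mul ν hwF,
    infinitePi_inter_eq_mul ν hwF]
  any_goals exact measurableSet_singleton _
  any_goals exact measurableSet_openReachAtLeast _ _ _
  · exact Set.disjoint_left.2 fun ω h1 h2 => by simp_all
  · exact (measurable_pi_apply w (measurableSet_singleton false)).inter
      (coordSigma_le _ _ (measurableSet_openReachAtLeast _ _ _))

end Step

section Comparison

variable {VB VT : Type*} [Countable VB] [Countable VT]
  {B : SimpleGraph VB} {T : SimpleGraph VT}
  [∀ v, Fintype (B.neighborSet v)] [∀ v, Fintype (T.neighborSet v)]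
  {φ : VT → VB} (ν : Measure Bool) [IsProbabilityMeasure ν]

/-- Run both explorations in step, examining `y` in `T` together with `φ y` in `B`, and lift the
neighbours of `φ y` to neighbours of `y`. -/
lemma infinitePi_openReachAtLeast_map_le
    (hlift : ∀ x v, B.Adj (φ x) v → ∃ y, T.Adj x y ∧ φ y = v)
    (k : ℕ) (L : List VT) {FB : Set VB} {FT : Set VT} (hF : Set.MapsTo φ FT FB) :
    infinitePi (fun _ => ν) (B.openReachAtLeast k (L.map φ) FB)
      ≤ infinitePi (fun _ => ν) (T.openReachAtLeast k L FT) := by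
  choose! lift hliftAdj hliftMap using hlift
  induction k generalizing L FB FT with
  | zero => simp [openReachAtLeast_zero]
  | succ k ihk =>
    induction L generalizing FB FT with
    | nil => simp [openReachAtLeast_succ_nil]
    | cons y L ih =>
      by_cases hy : φ y ∈ FB
      · calc infinitePi (fun _ => ν) (B.openReachAtLeast (k + 1) ((y :: L).map φ) FB)
            = infinitePi (fun _ => ν) (B.openReachAtLeast (k + 1) (L.map φ) FB) := by
              simp only [openReachAtLeast, List.map_cons, openReach_cons_of_mem hy]
          _ ≤ infinitePi (fun _ => ν) (T.openReachAtLeast (k + 1) L (insert y FT)) :=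
              ih (Set.insert_eq_of_mem hy ▸ hF.insert y)
          _ ≤ infinitePi (fun _ => ν) (T.openReachAtLeast (k + 1) (y :: L) FT) :=
              measure_mono (openReachAtLeast_mono (fun _ => List.mem_cons_of_mem y)
                (Set.subset_insert y FT))
      · have hyT : y ∉ FT := fun h => hy (hF h)
        set lifts := (B.neighborFinset (φ y)).toList.map (lift y)
        have hlifts : lifts.map φ = (B.neighborFinset (φ y)).toList := by
          rw [List.map_map, List.map_congr_left (g := id), List.map_id]
          intro v hv
          exact hliftMap y v (by simpa using hv)
        have hopen : infinitePi (fun _ => ν) (B.openReachAtLeast k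
              (L.map φ ++ (B.neighborFinset (φ y)).toList) (insert (φ y) FB))
            ≤ infinitePi (fun _ => ν) (T.openReachAtLeast k
              (L ++ (T.neighborFinset y).toList) (insert y FT)) := by
          rw [← hlifts, ← List.map_append]
          refine (ihk _ (hF.insert y)).trans (measure_mono (openReachAtLeast_mono ?_ le_rfl))
          intro a ha
          simp only [List.mem_append, lifts, List.mem_map, Finset.mem_toList,
            mem_neighborFinset] at ha ⊢
          obtain ha | ⟨v, hv, rfl⟩ := ha
          exacts [Or.inl ha, Or.inr (hliftAdj y v hv)]
        rw [List.map_cons, infinitePi_openReachAtLeast_succ_cons ν hy,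
          infinitePi_openReachAtLeast_succ_cons ν hyT]
        gcongr
        exact ih (hF.insert y)

lemma infinitePi_siteCluster_infinite_le
    (hlift : ∀ x v, B.Adj (φ x) v → ∃ y, T.Adj x y ∧ φ y = v) (x : VT) :
    infinitePi (fun _ => ν) {ω | (siteCluster B ω (φ x)).Infinite}
      ≤ infinitePi (fun _ => ν) {ω | (siteCluster T ω x).Infinite} := by
  rw [← iInter_openReachAtLeast_singleton, ← iInter_openReachAtLeast_singleton,
    (antitone_openReachAtLeast (G := T) [x] ∅).measure_iInter
      (fun k => (coordSigma_le _ _ (measurableSet_openReachAtLeast k _ _)).nullMeasurableSet)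
      ⟨0, measure_ne_top _ _⟩]
  refine le_iInf fun k => (measure_mono (Set.iInter_subset _ k)).trans ?_
  simpa using infinitePi_openReachAtLeast_map_le ν hlift k [x] (Set.mapsTo_empty φ ∅)

lemma infinitePi_sitePercolates_eq_zero_of_isFibration (hφ : IsFibration T B φ)
    (hT : infinitePi (fun _ => ν) {ω | sitePercolates T ω} = 0) :
    infinitePi (fun _ => ν) {ω | sitePercolates B ω} = 0 := by
  have : {ω | sitePercolates B ω} = ⋃ v, {ω | (siteCluster B ω v).Infinite} := by
    ext ω
    simp [sitePercolates]
  rw [this, measure_iUnion_null_iff]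
  intro v
  obtain ⟨x, rfl⟩ := hφ.1 v
  refine le_antisymm ((infinitePi_siteCluster_infinite_le ν hφ.2 x).trans ?_) zero_le
  exact hT ▸ measure_mono fun ω hω => ⟨x, hω⟩

end Comparison

end SimpleGraph

/-- **Benjamini–Schramm:** if there is a fibration from `Λ` to `S`, then
`p_c^site(Λ) ≤ p_c^site(S)`. -/
theorem stmt15 {VL VS : Type*} [Countable VL] [Countable VS]
    (Λ : SimpleGraph VL) (S : SimpleGraph VS)
    [∀ v, Fintype (Λ.neighborSet v)] [∀ v, Fintype (S.neighborSet v)]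
    (π : VL → VS) (hπ : IsFibration Λ S π) :
    pcSite Λ ≤ pcSite S := by
  refine sSup_le_sSup fun p ⟨hp, hΛ⟩ => ⟨hp, fun Q hQ => ?_⟩
  have := isProbabilityMeasure_bern hp
  rw [(iidMarginals_iff_eq_infinitePi Q).1 hQ]
  exact SimpleGraph.infinitePi_sitePercolates_eq_zero_of_isFibration _ hπ
    (hΛ _ ((iidMarginals_iff_eq_infinitePi _).2 rfl))
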